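/- arXiv:2512.01195 — 6 statements merged into one kernel-verified Lean document; each statement's English description precedes it below -/
import Mathlib

section
/- Let n = 3l with l ≥ 1. For a vector v of type (t0,t1,t2) in (Z/3Z)^n, the eigenvalue λ(v) of the Cayley graph Cay((Z/3Z)^n, B3) (where B3 is the set of balanced vectors) equals [multinomial(n; l,l,l) / multinomial(n; t0,t1,t2)] times the coefficient of x^{t0} y^{t1} z^{t2} in the polynomial (x^3 + y^3 + z^3 - 3xyz)^l. In particular, λ(v) depends only on the type of v and is invariant under permutations of (t0,t1,t2). -/
open Finset Complex MvPolynomial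

/-- The type of a vector in `(ℤ/3)^n`. -/
def typeCount {n : ℕ} (v : Fin n → ZMod 3) (i : ZMod 3) : ℕ :=
  (Finset.univ.filter (fun j => v j = i)).card
/-- Dot product in `(ℤ/3)^n`. -/
def dot3 {n : ℕ} (v w : Fin n → ZMod 3) : ZMod 3 :=
  ∑ j, v j * w j
/-- The set of balanced vectors of `(ℤ/3)^{3l}`. -/
def B3 (l : ℕ) : Finset (Fin (3 * l) → ZMod 3) :=
  Finset.univ.filter (fun b => typeCount b 0 = l ∧ typeCount b 1 = l ∧ typeCount b 2 = l)
/-- The eigenvalue of `Cay((ℤ/3)^{3l}, B3)` corresponding to `v`. -/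
noncomputable def lam (l : ℕ) (v : Fin (3 * l) → ZMod 3) : ℂ :=
  ∑ b ∈ B3 l, Complex.exp (2 * Real.pi * Complex.I / 3) ^ (dot3 v b).val

noncomputable def om : ℂ := Complex.exp (2 * Real.pi * Complex.I / 3)

lemma om_pow_three : om ^ 3 = 1 := by
  rw [om, ← Complex.exp_nat_mul]
  norm_num
  rw [show ((3:ℂ)) * (2 * Real.pi * Complex.I / 3) = 2 * Real.pi * Complex.I by ring]
  exact Complex.exp_two_pi_mul_I

lemma om_prim : IsPrimitiveRoot om 3 := by
  have h := Complex.isPrimitiveRoot_exp 3 (by norm_num)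
  have : om = Complex.exp (2 * Real.pi * Complex.I / (3:ℕ)) := by norm_num [om]
  rw [this]; exact h

lemma om_sum : om ^ 2 + om + 1 = 0 := by
  have h1 : om ≠ 1 := om_prim.ne_one (by norm_num)
  have h3 : (om - 1) * (om ^ 2 + om + 1) = 0 := by linear_combination om_pow_three
  rcases mul_eq_zero.mp h3 with h | h
  · exact absurd (sub_eq_zero.mp h) h1
  · exact h

lemma om_pow_mod (m : ℕ) : om ^ m = om ^ (m % 3) := by
  conv_lhs => rw [← Nat.div_add_mod m 3, pow_add, pow_mul, om_pow_three, one_pow, one_mul]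

noncomputable def chi (z : ZMod 3) : ℂ := om ^ z.val

lemma chi_add (x y : ZMod 3) : chi (x + y) = chi x * chi y := by
  rw [chi, chi, chi, ← pow_add, om_pow_mod, om_pow_mod (x.val + y.val)]
  congr 1
  rw [ZMod.val_add]
  omega

lemma chi_sum {α : Type*} (s : Finset α) (f : α → ZMod 3) :
    chi (∑ j ∈ s, f j) = ∏ j ∈ s, chi (f j) := by
  induction s using Finset.cons_induction with
  | empty => simp [chi]
  | cons a s ha ih => rw [Finset.sum_cons, Finset.prod_cons, chi_add, ih]

def mz : Fin 3 → ZMod 3 := fun j => (j.val : ZMod 3)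
def zm : ZMod 3 → Fin 3 := fun z => ⟨z.val, z.val_lt⟩

lemma mz_zm (z : ZMod 3) : mz (zm z) = z := ZMod.natCast_zmod_val z
lemma zm_mz (j : Fin 3) : zm (mz j) = j := by
  ext
  exact ZMod.val_natCast_of_lt j.isLt

noncomputable def mu (a : Fin 3 → ℕ) : Fin 3 →₀ ℕ := ∑ j, Finsupp.single j (a j)

lemma mu_apply (a : Fin 3 → ℕ) (j : Fin 3) : mu a j = a j := by
  rw [mu, Finsupp.finset_sum_apply]
  simp [Finsupp.single_apply]

lemma eq_mu_iff (d : Fin 3 →₀ ℕ) (a : Fin 3 → ℕ) : d = mu a ↔ ∀ j, d j = a j := by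
  constructor
  · intro h j; rw [h, mu_apply]
  · intro h; ext j; rw [h, mu_apply]

lemma prod_monomial {α R : Type*} [CommSemiring R] (s : Finset α) (d : α → (Fin 3 →₀ ℕ)) :
    ∏ j ∈ s, (monomial (d j) (1:R)) = monomial (∑ j ∈ s, d j) 1 := by
  induction s using Finset.cons_induction with
  | empty => simp
  | cons a s ha ih => rw [Finset.prod_cons, Finset.sum_cons, ih, monomial_mul, mul_one]

lemma sum_single_apply {n : ℕ} (b : Fin n → Fin 3) (i : Fin 3) :
    (∑ j, Finsupp.single (b j) (1:ℕ)) i = (univ.filter (fun j => b j = i)).card := by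
  rw [Finsupp.finset_sum_apply, Finset.card_filter]
  simp [Finsupp.single_apply]

noncomputable def Lp (c : Fin 3 → Fin 3 → ℂ) (i : Fin 3) : MvPolynomial (Fin 3) ℂ :=
  ∑ j, MvPolynomial.C (c i j) * MvPolynomial.X j

lemma Lp_pow (c : Fin 3 → Fin 3 → ℂ) (i : Fin 3) (n : ℕ) :
    Lp c i ^ n = ∑ k ∈ Finset.piAntidiag univ n,
      C ((Nat.multinomial univ k : ℂ) * ∏ j, c i j ^ k j) * monomial (mu k) 1 := by
  rw [Lp, Finset.sum_pow_eq_sum_piAntidiag]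
  refine Finset.sum_congr rfl fun k hk => ?_
  rw [map_mul]
  have h1 : ∀ j : Fin 3, (C (c i j) * X j) ^ k j
      = C (c i j ^ k j) * monomial (Finsupp.single j (k j)) (1:ℂ) := by
    intro j; rw [mul_pow, ← map_pow, X_pow_eq_monomial]
  simp_rw [h1]
  rw [Finset.prod_mul_distrib, prod_monomial, ← map_prod, ← mu]
  rw [C_eq_coe_nat]
  ring

lemma coeff_prod_pow (c : Fin 3 → Fin 3 → ℂ) (b a : Fin 3 → ℕ) :
    coeff (mu a) (∏ i, Lp c i ^ b i)
    = ∑ K ∈ Fintype.piFinset (fun i => Finset.piAntidiag univ (b i)),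
        if (∀ j, ∑ i, K i j = a j)
        then (∏ i, (Nat.multinomial univ (K i) : ℂ)) * ∏ i, ∏ j, c i j ^ K i j
        else 0 := by
  simp_rw [Lp_pow]
  rw [Finset.prod_univ_sum]
  rw [coeff_sum]
  refine Finset.sum_congr rfl fun K hK => ?_
  rw [Finset.prod_mul_distrib, ← map_prod, prod_monomial, C_mul_monomial, mul_one,
    coeff_monomial]
  have hcond : (∑ i, mu (K i)) = mu a ↔ ∀ j, ∑ i, K i j = a j := by
    rw [eq_mu_iff]
    refine forall_congr' fun j => ?_
    rw [Finsupp.finset_sum_apply]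
    simp_rw [mu_apply]
  by_cases h : ∀ j, ∑ i, K i j = a j
  · rw [if_pos h, if_pos (hcond.mpr h), Finset.prod_mul_distrib]
  · rw [if_neg h, if_neg (fun hc => h (hcond.mp hc))]

lemma nat_term_eq (a b : Fin 3 → ℕ) (K : Fin 3 → Fin 3 → ℕ)
    (hrow : ∀ i, ∑ j, K i j = b i) (hcol : ∀ j, ∑ i, K i j = a j) :
    (∏ j, (a j).factorial) * (∏ i, Nat.multinomial univ (K i))
      = (∏ i, (b i).factorial) * (∏ j, Nat.multinomial univ (fun i => K i j)) := by
  have hF : 0 < ∏ i, ∏ j, (K i j).factorial :=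
    Finset.prod_pos fun i _ => Finset.prod_pos fun j _ => Nat.factorial_pos _
  apply Nat.eq_of_mul_eq_mul_right hF
  have h1 : ∀ i, Nat.multinomial univ (K i) * ∏ j, (K i j).factorial = (b i).factorial := by
    intro i; rw [mul_comm, Nat.multinomial_spec, hrow]
  have h2 : ∀ j, Nat.multinomial univ (fun i => K i j) * ∏ i, (K i j).factorial
      = (a j).factorial := by
    intro j; rw [mul_comm, Nat.multinomial_spec, hcol]
  have e1 : (∏ j, (a j).factorial) * (∏ i, Nat.multinomial univ (K i))
      * (∏ i, ∏ j, (K i j).factorial)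
      = (∏ j, (a j).factorial) * ∏ i, (b i).factorial := by
    rw [mul_assoc, ← Finset.prod_mul_distrib]
    congr 1
    exact Finset.prod_congr rfl fun i _ => h1 i
  have e2 : (∏ i, (b i).factorial) * (∏ j, Nat.multinomial univ (fun i => K i j))
      * (∏ i, ∏ j, (K i j).factorial)
      = (∏ i, (b i).factorial) * ∏ j, (a j).factorial := by
    rw [mul_assoc,
      show (∏ i, ∏ j, (K i j).factorial) = ∏ j, ∏ i, (K i j).factorial from Finset.prod_comm,
      ← Finset.prod_mul_distrib]
    congr 1
    exact Finset.prod_congr rfl fun j _ => h2 j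
  rw [e1, e2, mul_comm]

lemma duality (c : Fin 3 → Fin 3 → ℂ) (hc : ∀ i j, c i j = c j i) (a b : Fin 3 → ℕ) :
    (∏ j, ((a j).factorial : ℂ)) * coeff (mu a) (∏ i, Lp c i ^ b i)
    = (∏ i, ((b i).factorial : ℂ)) * coeff (mu b) (∏ j, Lp c j ^ a j) := by
  rw [coeff_prod_pow, coeff_prod_pow, Finset.mul_sum, Finset.mul_sum]
  simp_rw [mul_ite, mul_zero, ← Finset.sum_filter]
  refine Finset.sum_nbij' (fun K => fun p q => K q p) (fun K => fun p q => K q p) ?_ ?_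
    (fun _ _ => rfl) (fun _ _ => rfl) ?_
  · intro K hK
    simp only [Finset.mem_filter, Fintype.mem_piFinset, Finset.mem_piAntidiag] at hK ⊢
    exact ⟨fun j => ⟨hK.2 j, fun i _ => Finset.mem_univ i⟩, fun i => (hK.1 i).1⟩
  · intro K hK
    simp only [Finset.mem_filter, Fintype.mem_piFinset, Finset.mem_piAntidiag] at hK ⊢
    exact ⟨fun j => ⟨hK.2 j, fun i _ => Finset.mem_univ i⟩, fun i => (hK.1 i).1⟩
  · intro K hK
    simp only [Finset.mem_filter, Fintype.mem_piFinset, Finset.mem_piAntidiag] at hK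
    have hrow : ∀ i, ∑ j, K i j = b i := fun i => (hK.1 i).1
    have hcol : ∀ j, ∑ i, K i j = a j := hK.2
    have hnat := nat_term_eq a b K hrow hcol
    have hcast : (∏ j, ((a j).factorial : ℂ)) * (∏ i, (Nat.multinomial univ (K i) : ℂ))
        = (∏ i, ((b i).factorial : ℂ)) * (∏ j, (Nat.multinomial univ (fun i => K i j) : ℂ)) := by
      have := congrArg (Nat.cast (R := ℂ)) hnat
      push_cast at this
      exact this
    have hcprod : (∏ i, ∏ j, c i j ^ K i j) = ∏ p, ∏ q, c p q ^ K q p := by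
      rw [Finset.prod_comm]
      exact Finset.prod_congr rfl fun j _ => Finset.prod_congr rfl fun i _ => by rw [hc i j]
    calc (∏ j, ((a j).factorial : ℂ)) * ((∏ i, (Nat.multinomial univ (K i) : ℂ)) * ∏ i, ∏ j, c i j ^ K i j)
        = ((∏ j, ((a j).factorial : ℂ)) * (∏ i, (Nat.multinomial univ (K i) : ℂ))) * ∏ i, ∏ j, c i j ^ K i j := by ring
      _ = ((∏ i, ((b i).factorial : ℂ)) * (∏ j, (Nat.multinomial univ (fun i => K i j) : ℂ))) * ∏ p, ∏ q, c p q ^ K q p := by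
          rw [hcast, hcprod]
      _ = (∏ i, ((b i).factorial : ℂ)) * ((∏ p, (Nat.multinomial univ (fun q => K q p) : ℂ)) * ∏ p, ∏ q, c p q ^ K q p) := by ring

noncomputable def cmat : Fin 3 → Fin 3 → ℂ := fun i j => chi (mz i * mz j)

lemma cmat_symm : ∀ i j, cmat i j = cmat j i := by
  intro i j
  show chi (mz i * mz j) = chi (mz j * mz i)
  rw [mul_comm]

noncomputable def Pz (i : ZMod 3) : MvPolynomial (Fin 3) ℂ :=
  ∑ j, MvPolynomial.C (chi (i * mz j)) * MvPolynomial.X j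

lemma mem_B3_iff (l : ℕ) (b : Fin (3*l) → ZMod 3) : b ∈ B3 l ↔ ∀ i, typeCount b i = l := by
  rw [B3, Finset.mem_filter]
  constructor
  · rintro ⟨-, h0, h1, h2⟩ i
    rcases (show i = 0 ∨ i = 1 ∨ i = 2 by revert i; decide) with rfl | rfl | rfl
    exacts [h0, h1, h2]
  · intro h; exact ⟨Finset.mem_univ _, h 0, h 1, h 2⟩

lemma lam_coeff (l : ℕ) (v : Fin (3*l) → ZMod 3) :
    lam l v = coeff (mu (fun _ => l)) (∏ i, Lp cmat i ^ typeCount v (mz i)) := by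
  have h1 : (∏ i, Lp cmat i ^ typeCount v (mz i)) = ∏ i : ZMod 3, Pz i ^ typeCount v i := by
    apply Fintype.prod_equiv ⟨mz, zm, zm_mz, mz_zm⟩
    intro i
    rfl
  have h2 : ∏ i : ZMod 3, Pz i ^ typeCount v i = ∏ j, Pz (v j) := by
    rw [← Finset.prod_fiberwise_of_maps_to (g := v) (fun j _ => Finset.mem_univ (v j))
      (fun j => Pz (v j))]
    refine Finset.prod_congr rfl fun i _ => ?_
    rw [typeCount, ← Finset.prod_const]
    refine Finset.prod_congr rfl fun j hj => ?_
    rw [(Finset.mem_filter.mp hj).2]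
  have hX : ∀ c : Fin 3, (MvPolynomial.X c : MvPolynomial (Fin 3) ℂ)
      = monomial (Finsupp.single c 1) 1 := by
    intro c; rw [← X_pow_eq_monomial, pow_one]
  have h3 : (∏ j, Pz (v j)) = ∑ b ∈ Fintype.piFinset (fun _ : Fin (3*l) => (univ : Finset (Fin 3))),
      C (∏ j, chi (v j * mz (b j))) * monomial (∑ j, Finsupp.single (b j) 1) 1 := by
    simp_rw [Pz]
    rw [Finset.prod_univ_sum]
    refine Finset.sum_congr rfl fun b hb => ?_
    rw [Finset.prod_mul_distrib, ← map_prod]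
    congr 1
    simp_rw [hX]
    exact prod_monomial _ _
  rw [h1, h2, h3, coeff_sum]
  simp_rw [C_mul_monomial, mul_one, coeff_monomial]
  rw [← Finset.sum_filter, lam]
  refine Finset.sum_nbij' (fun b' => zm ∘ b') (fun b => mz ∘ b) ?_ ?_ ?_ ?_ ?_
  · intro b' hb'
    have hb := (mem_B3_iff l b').mp hb'
    simp only [Finset.mem_filter, Fintype.mem_piFinset]
    refine ⟨fun j => Finset.mem_univ _, ?_⟩
    rw [eq_mu_iff]
    intro c
    simp only [Function.comp_apply]
    rw [sum_single_apply]
    have : (univ.filter (fun j => zm (b' j) = c)) = (univ.filter (fun j => b' j = mz c)) := by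
      refine Finset.filter_congr fun j _ => ?_
      constructor
      · intro h; rw [← h, mz_zm]
      · intro h; rw [h, zm_mz]
    rw [this]
    exact hb (mz c)
  · intro b hb
    simp only [Finset.mem_filter, Fintype.mem_piFinset] at hb
    have hcond := hb.2
    rw [eq_mu_iff] at hcond
    rw [mem_B3_iff]
    intro i
    rw [typeCount]
    simp only [Function.comp_apply]
    have : (univ.filter (fun j => mz (b j) = i)) = (univ.filter (fun j => b j = zm i)) := by
      refine Finset.filter_congr fun j _ => ?_
      constructor
      · intro h; rw [← h, zm_mz]
      · intro h; rw [h, mz_zm]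
    rw [this]
    have := hcond (zm i)
    rw [sum_single_apply] at this
    exact this
  · intro b' _; funext j; simp [mz_zm]
  · intro b _; funext j; simp [zm_mz]
  · intro b' hb'
    have : (dot3 v b').val = ((∑ j, v j * b' j : ZMod 3)).val := rfl
    calc Complex.exp (2 * Real.pi * Complex.I / 3) ^ (dot3 v b').val
        = chi (∑ j, v j * b' j) := rfl
      _ = ∏ j, chi (v j * b' j) := chi_sum _ _
      _ = ∏ j, chi (v j * mz ((zm ∘ b') j)) := by
          refine Finset.prod_congr rfl fun j _ => ?_
          rw [Function.comp_apply, mz_zm]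

/-- The coefficient of `x^{t0} y^{t1} z^{t2}` in `(x³+y³+z³-3xyz)^l`. -/
noncomputable def coeffW (l t0 t1 t2 : ℕ) : ℤ :=
  MvPolynomial.coeff
    (Finsupp.single (0 : Fin 3) t0 + Finsupp.single 1 t1 + Finsupp.single 2 t2)
    ((X 0 ^ 3 + X 1 ^ 3 + X 2 ^ 3 - 3 * X 0 * X 1 * X 2 : MvPolynomial (Fin 3) ℤ) ^ l)

lemma cmat_vals : cmat 0 0 = 1 ∧ cmat 0 1 = 1 ∧ cmat 0 2 = 1 ∧ cmat 1 0 = 1 ∧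
    cmat 1 1 = om ∧ cmat 1 2 = om^2 ∧ cmat 2 0 = 1 ∧ cmat 2 1 = om^2 ∧ cmat 2 2 = om := by
  refine ⟨?_, ?_, ?_, ?_, ?_, ?_, ?_, ?_, ?_⟩ <;>
    · show om ^ _ = _
      norm_num [show ∀ a b : Fin 3, (mz a * mz b).val = (a.val * b.val) % 3 from by decide]

lemma factorization3 : Lp cmat 0 * Lp cmat 1 * Lp cmat 2
    = (X 0 ^ 3 + X 1 ^ 3 + X 2 ^ 3 - 3 * X 0 * X 1 * X 2 : MvPolynomial (Fin 3) ℂ) := by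
  obtain ⟨h00, h01, h02, h10, h11, h12, h20, h21, h22⟩ := cmat_vals
  have hu : (C om : MvPolynomial (Fin 3) ℂ)^2 + C om + 1 = 0 := by
    rw [← map_pow, ← map_one (C (σ := Fin 3) (R := ℂ)), ← map_add, ← map_add, om_sum, map_zero]
  have hL : ∀ i, Lp cmat i = C (cmat i 0) * X 0 + C (cmat i 1) * X 1 + C (cmat i 2) * X 2 := by
    intro i; rw [Lp, Fin.sum_univ_three]
  rw [hL, hL, hL, h00, h01, h02, h10, h11, h12, h20, h21, h22]
  simp only [map_one, one_mul, map_pow]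
  linear_combination (X 0*X 1*X 2*(C om)^2 + (X 1)^2*X 2*(C om)^2 + X 1*(X 2)^2*(C om)^2
    + X 0*(X 1)^2*(C om) + X 0*(X 2)^2*(C om) + (X 1)^3*(C om) + (X 2)^3*(C om)
    - X 0*X 1*X 2*(C om) + (X 0)^2*X 1 + 3*X 0*X 1*X 2 + (X 0)^2*X 2 - (X 1)^3 - (X 2)^3) * hu

lemma coeffW_eq (l t0 t1 t2 : ℕ) :
    ((coeffW l t0 t1 t2 : ℤ) : ℂ) = coeff (mu ![t0,t1,t2]) (∏ j, Lp cmat j ^ l) := by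
  have hmap : map (Int.castRingHom ℂ)
      ((X 0 ^ 3 + X 1 ^ 3 + X 2 ^ 3 - 3 * X 0 * X 1 * X 2 : MvPolynomial (Fin 3) ℤ))
      = (X 0 ^ 3 + X 1 ^ 3 + X 2 ^ 3 - 3 * X 0 * X 1 * X 2 : MvPolynomial (Fin 3) ℂ) := by
    simp [map_sub, map_add, map_pow, map_mul]
  have hprod : (∏ j, Lp cmat j ^ l)
      = (X 0 ^ 3 + X 1 ^ 3 + X 2 ^ 3 - 3 * X 0 * X 1 * X 2 : MvPolynomial (Fin 3) ℂ) ^ l := by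
    rw [Fin.prod_univ_three, ← mul_pow, ← mul_pow, factorization3]
  have hmu : mu ![t0,t1,t2]
      = Finsupp.single (0 : Fin 3) t0 + Finsupp.single 1 t1 + Finsupp.single 2 t2 := by
    rw [mu, Fin.sum_univ_three]
    simp
  rw [hprod, hmu, coeffW, ← hmap, ← map_pow, coeff_map]
  simp

lemma lam_formula (l : ℕ) (t0 t1 t2 : ℕ) (hsum : t0 + t1 + t2 = 3 * l)
    (v : Fin (3 * l) → ZMod 3)
    (hv : typeCount v 0 = t0 ∧ typeCount v 1 = t1 ∧ typeCount v 2 = t2) :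
    lam l v = ((Nat.multinomial Finset.univ ![l, l, l] : ℂ) /
        (Nat.multinomial Finset.univ ![t0, t1, t2] : ℂ)) * (coeffW l t0 t1 t2 : ℂ) := by
  have htc : ∀ i : Fin 3, typeCount v (mz i) = ![t0,t1,t2] i := by
    intro i
    fin_cases i
    · simpa [mz] using hv.1
    · simpa [mz] using hv.2.1
    · simpa [mz] using hv.2.2
  have hA := duality cmat cmat_symm (fun _ => l) ![t0,t1,t2]
  have hlam : lam l v = coeff (mu fun _ => l) (∏ i, Lp cmat i ^ ![t0,t1,t2] i) := by
    rw [lam_coeff]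
    refine congrArg (coeff _) ?_
    exact Finset.prod_congr rfl fun i _ => by rw [htc i]
  rw [show (∏ j, Lp cmat j ^ (fun _ : Fin 3 => l) j) = ∏ j, Lp cmat j ^ l from rfl] at hA
  rw [← hlam] at hA
  rw [← coeffW_eq] at hA
  have hBprod : (∏ _j : Fin 3, ((l.factorial : ℂ))) = ((l.factorial * l.factorial * l.factorial : ℕ) : ℂ) := by
    rw [Fin.prod_univ_three]; push_cast; ring
  have hAprod : (∏ i : Fin 3, (((![t0,t1,t2] i).factorial : ℕ) : ℂ)) = ((t0.factorial * t1.factorial * t2.factorial : ℕ) : ℂ) := by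
    rw [Fin.prod_univ_three]
    simp only [Matrix.cons_val_zero, Matrix.cons_val_one, Matrix.head_cons,
      Matrix.cons_val_two, Matrix.tail_cons]
    push_cast; ring
  rw [show (∏ j : Fin 3, ((((fun _ : Fin 3 => l) j).factorial : ℕ) : ℂ)) = ∏ _j : Fin 3, ((l.factorial : ℂ)) from rfl] at hA
  rw [hBprod, hAprod] at hA
  have hM1 : l.factorial * l.factorial * l.factorial * Nat.multinomial univ ![l,l,l] = (3*l).factorial := by
    have h := Nat.multinomial_spec univ ![l,l,l]
    rw [Fin.prod_univ_three, Fin.sum_univ_three] at h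
    simpa [show l+l+l = 3*l by ring] using h
  have hM2 : t0.factorial * t1.factorial * t2.factorial * Nat.multinomial univ ![t0,t1,t2] = (3*l).factorial := by
    have h := Nat.multinomial_spec univ ![t0,t1,t2]
    rw [Fin.prod_univ_three, Fin.sum_univ_three] at h
    simpa [hsum] using h
  have hM2ne : ((Nat.multinomial univ ![t0,t1,t2] : ℕ) : ℂ) ≠ 0 :=
    Nat.cast_ne_zero.mpr (Nat.multinomial_pos _ _).ne'
  have hBne : ((l.factorial * l.factorial * l.factorial : ℕ) : ℂ) ≠ 0 :=
    Nat.cast_ne_zero.mpr (by positivity)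
  rw [div_mul_eq_mul_div, eq_div_iff hM2ne]
  apply mul_left_cancel₀ hBne
  have hM1c := congrArg (Nat.cast (R := ℂ)) hM1
  have hM2c := congrArg (Nat.cast (R := ℂ)) hM2
  push_cast at hM1c hM2c hA ⊢
  linear_combination (Nat.multinomial univ ![t0,t1,t2] : ℂ) * hA
    + (coeffW l t0 t1 t2 : ℂ) * hM2c - (coeffW l t0 t1 t2 : ℂ) * hM1c

lemma perm2 {a b x y : ℕ} (h : ({a, b} : Multiset ℕ) = {x, y}) :
    (a = x ∧ b = y) ∨ (a = y ∧ b = x) := by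
  have ha : a ∈ ({x, y} : Multiset ℕ) := by rw [← h]; exact Multiset.mem_cons_self _ _
  rcases Multiset.mem_cons.mp ha with h1 | h1
  · subst h1
    exact Or.inl ⟨rfl, Multiset.singleton_inj.mp ((Multiset.cons_inj_right a).mp h)⟩
  · rw [Multiset.mem_singleton] at h1
    subst h1
    rw [show ({x, a} : Multiset ℕ) = a ::ₘ {x} from Multiset.cons_swap x a {}] at h
    exact Or.inr ⟨rfl, Multiset.singleton_inj.mp ((Multiset.cons_inj_right a).mp h)⟩

lemma perm3 {a b c x y z : ℕ} (h : ({a, b, c} : Multiset ℕ) = {x, y, z}) :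
    (a = x ∧ ((b = y ∧ c = z) ∨ (b = z ∧ c = y))) ∨
    (a = y ∧ ((b = x ∧ c = z) ∨ (b = z ∧ c = x))) ∨
    (a = z ∧ ((b = x ∧ c = y) ∨ (b = y ∧ c = x))) := by
  have ha : a ∈ ({x, y, z} : Multiset ℕ) := by rw [← h]; exact Multiset.mem_cons_self _ _
  rcases Multiset.mem_cons.mp ha with h1 | h1
  · subst h1
    exact Or.inl ⟨rfl, perm2 ((Multiset.cons_inj_right a).mp h)⟩
  rcases Multiset.mem_cons.mp h1 with h2 | h2
  · subst h2
    rw [show ({x, a, z} : Multiset ℕ) = a ::ₘ {x, z} from Multiset.cons_swap x a {z}] at h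

    exact Or.inr (Or.inl ⟨rfl, perm2 ((Multiset.cons_inj_right a).mp h)⟩)
  · rw [Multiset.mem_singleton] at h2
    subst h2
    rw [show ({x, y, a} : Multiset ℕ) = a ::ₘ {x, y} from by
      rw [show ({x, y, a} : Multiset ℕ) = x ::ₘ y ::ₘ a ::ₘ 0 from rfl,
        Multiset.cons_swap y a, Multiset.cons_swap x a]
      rfl] at h
    exact Or.inr (Or.inr ⟨rfl, perm2 ((Multiset.cons_inj_right a).mp h)⟩)

lemma mult3_eq_of {s0 s1 s2 t0 t1 t2 : ℕ} (h1 : s0 + s1 + s2 = t0 + t1 + t2)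
    (h2 : s0.factorial * s1.factorial * s2.factorial
        = t0.factorial * t1.factorial * t2.factorial) :
    Nat.multinomial Finset.univ ![s0, s1, s2] = Nat.multinomial Finset.univ ![t0, t1, t2] := by
  have hs := Nat.multinomial_spec Finset.univ ![s0, s1, s2]
  have ht := Nat.multinomial_spec Finset.univ ![t0, t1, t2]
  rw [Fin.prod_univ_three, Fin.sum_univ_three] at hs ht
  simp only [Matrix.cons_val_zero, Matrix.cons_val_one, Matrix.head_cons,
    Matrix.cons_val_two, Matrix.tail_cons] at hs ht
  have hpos : 0 < s0.factorial * s1.factorial * s2.factorial := by positivity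
  apply Nat.eq_of_mul_eq_mul_left hpos
  rw [hs, h1, ← ht, h2]

lemma coeffW_comm1 (l a b c : ℕ) : coeffW l a b c = coeffW l b a c := by
  classical
  set σ : Fin 3 ≃ Fin 3 := Equiv.swap 0 1 with hσ
  have hWZ : rename (⇑σ) ((X 0 ^ 3 + X 1 ^ 3 + X 2 ^ 3 - 3 * X 0 * X 1 * X 2 :
      MvPolynomial (Fin 3) ℤ) ^ l)
      = (X 0 ^ 3 + X 1 ^ 3 + X 2 ^ 3 - 3 * X 0 * X 1 * X 2 : MvPolynomial (Fin 3) ℤ) ^ l := by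
    rw [map_pow]
    congr 1
    simp only [map_sub, map_add, map_pow, map_mul, rename_X, map_ofNat]
    rw [hσ]
    rw [Equiv.swap_apply_left, Equiv.swap_apply_right,
      Equiv.swap_apply_of_ne_of_ne (by decide) (by decide)]
    ring
  have key := coeff_rename_mapDomain (⇑σ) σ.injective
    ((X 0 ^ 3 + X 1 ^ 3 + X 2 ^ 3 - 3 * X 0 * X 1 * X 2 : MvPolynomial (Fin 3) ℤ) ^ l)
    (Finsupp.single (0 : Fin 3) a + Finsupp.single 1 b + Finsupp.single 2 c)
  rw [hWZ] at key
  have hmd : Finsupp.mapDomain (⇑σ)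
      (Finsupp.single (0 : Fin 3) a + Finsupp.single 1 b + Finsupp.single 2 c)
      = Finsupp.single (0 : Fin 3) b + Finsupp.single 1 a + Finsupp.single 2 c := by
    rw [Finsupp.mapDomain_add, Finsupp.mapDomain_add, Finsupp.mapDomain_single,
      Finsupp.mapDomain_single, Finsupp.mapDomain_single, hσ]
    rw [Equiv.swap_apply_left, Equiv.swap_apply_right,
      Equiv.swap_apply_of_ne_of_ne (by decide) (by decide)]
    abel
  rw [hmd] at key
  rw [coeffW, coeffW, ← key]

lemma coeffW_comm2 (l a b c : ℕ) : coeffW l a b c = coeffW l a c b := by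
  classical
  set σ : Fin 3 ≃ Fin 3 := Equiv.swap 1 2 with hσ
  have hWZ : rename (⇑σ) ((X 0 ^ 3 + X 1 ^ 3 + X 2 ^ 3 - 3 * X 0 * X 1 * X 2 :
      MvPolynomial (Fin 3) ℤ) ^ l)
      = (X 0 ^ 3 + X 1 ^ 3 + X 2 ^ 3 - 3 * X 0 * X 1 * X 2 : MvPolynomial (Fin 3) ℤ) ^ l := by
    rw [map_pow]
    congr 1
    simp only [map_sub, map_add, map_pow, map_mul, rename_X, map_ofNat]
    rw [hσ]
    rw [Equiv.swap_apply_left, Equiv.swap_apply_right,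
      Equiv.swap_apply_of_ne_of_ne (by decide) (by decide)]
    ring
  have key := coeff_rename_mapDomain (⇑σ) σ.injective
    ((X 0 ^ 3 + X 1 ^ 3 + X 2 ^ 3 - 3 * X 0 * X 1 * X 2 : MvPolynomial (Fin 3) ℤ) ^ l)
    (Finsupp.single (0 : Fin 3) a + Finsupp.single 1 b + Finsupp.single 2 c)
  rw [hWZ] at key
  have hmd : Finsupp.mapDomain (⇑σ)
      (Finsupp.single (0 : Fin 3) a + Finsupp.single 1 b + Finsupp.single 2 c)
      = Finsupp.single (0 : Fin 3) a + Finsupp.single 1 c + Finsupp.single 2 b := by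
    rw [Finsupp.mapDomain_add, Finsupp.mapDomain_add, Finsupp.mapDomain_single,
      Finsupp.mapDomain_single, Finsupp.mapDomain_single, hσ]
    rw [Equiv.swap_apply_left, Equiv.swap_apply_right,
      Equiv.swap_apply_of_ne_of_ne (by decide) (by decide)]
    abel
  rw [hmd] at key
  rw [coeffW, coeffW, ← key]

lemma coeffW_rot (l a b c : ℕ) : coeffW l a b c = coeffW l b c a := by
  rw [coeffW_comm1, coeffW_comm2]

theorem stmt3 (l : ℕ) (hl : 1 ≤ l) (t0 t1 t2 : ℕ) (hsum : t0 + t1 + t2 = 3 * l)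
    (v : Fin (3 * l) → ZMod 3)
    (hv : typeCount v 0 = t0 ∧ typeCount v 1 = t1 ∧ typeCount v 2 = t2) :
    lam l v = ((Nat.multinomial Finset.univ ![l, l, l] : ℂ) /
        (Nat.multinomial Finset.univ ![t0, t1, t2] : ℂ)) * (coeffW l t0 t1 t2 : ℂ) ∧
    ∀ w : Fin (3 * l) → ZMod 3,
      ({typeCount w 0, typeCount w 1, typeCount w 2} : Multiset ℕ)
        = ({t0, t1, t2} : Multiset ℕ) → lam l w = lam l v := by
  have main := lam_formula l t0 t1 t2 hsum v hv
  refine ⟨main, ?_⟩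
  intro w hw
  have hperm := perm3 hw
  have hsw : typeCount w 0 + typeCount w 1 + typeCount w 2 = 3 * l := by
    rcases hperm with ⟨h1, ⟨h2, h3⟩ | ⟨h2, h3⟩⟩ | ⟨h1, ⟨h2, h3⟩ | ⟨h2, h3⟩⟩ |
      ⟨h1, ⟨h2, h3⟩ | ⟨h2, h3⟩⟩ <;> omega
  have hf := lam_formula l (typeCount w 0) (typeCount w 1) (typeCount w 2) hsw w ⟨rfl, rfl, rfl⟩
  rw [hf, main]
  rcases hperm with ⟨h1, ⟨h2, h3⟩ | ⟨h2, h3⟩⟩ | ⟨h1, ⟨h2, h3⟩ | ⟨h2, h3⟩⟩ |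
      ⟨h1, ⟨h2, h3⟩ | ⟨h2, h3⟩⟩ <;> rw [h1, h2, h3]
  · rw [mult3_eq_of (by omega) (by ring : t0.factorial * t2.factorial * t1.factorial = t0.factorial * t1.factorial * t2.factorial),
      coeffW_comm2]
  · rw [mult3_eq_of (by omega) (by ring : t1.factorial * t0.factorial * t2.factorial = t0.factorial * t1.factorial * t2.factorial),
      coeffW_comm1]
  · rw [mult3_eq_of (by omega) (by ring : t1.factorial * t2.factorial * t0.factorial = t0.factorial * t1.factorial * t2.factorial),
      coeffW_rot, coeffW_rot]
  · rw [mult3_eq_of (by omega) (by ring : t2.factorial * t0.factorial * t1.factorial = t0.factorial * t1.factorial * t2.factorial),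
      coeffW_rot]
  · rw [mult3_eq_of (by omega) (by ring : t2.factorial * t1.factorial * t0.factorial = t0.factorial * t1.factorial * t2.factorial),
      coeffW_rot, coeffW_comm1]
end

section
/- Define f(t0,t1,t2) = n(n-4)(n-5) - t0(t0-1)(t0-2) - t1(t1-1)(t1-2) - t2(t2-1)(t2-2) - 3·t0·t1·t2, where n = t0+t1+t2. Then for all integers t0, t1, t2 ≥ 3, f(t0,t1,t2) ≥ 0, with f(3,3,3) = 81. -/
/-- `f(t0,t1,t2) = n(n-4)(n-5) - Σ tᵢ(tᵢ-1)(tᵢ-2) - 3 t0 t1 t2` with `n = t0+t1+t2`. -/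
def ffun (t0 t1 t2 : ℤ) : ℤ :=
  (t0 + t1 + t2) * (t0 + t1 + t2 - 4) * (t0 + t1 + t2 - 5)
    - t0 * (t0 - 1) * (t0 - 2) - t1 * (t1 - 1) * (t1 - 2) - t2 * (t2 - 1) * (t2 - 2)
    - 3 * t0 * t1 * t2

/-! Shifting each variable by `3`, `f` becomes a polynomial with nonnegative coefficients and
constant term `81 = f(3,3,3)`; the cubes cancel, so no negative terms survive. -/

theorem ffun_add_three (x y z : ℤ) :
    ffun (x + 3) (y + 3) (z + 3) =
      81 + 63 * (x + y + z) + 12 * (x ^ 2 + y ^ 2 + z ^ 2) + 27 * (x * y + y * z + z * x)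
        + 3 * (x ^ 2 * (y + z) + y ^ 2 * (z + x) + z ^ 2 * (x + y)) + 3 * x * y * z := by
  unfold ffun
  ring

theorem eighty_one_le_ffun {t0 t1 t2 : ℤ} (h0 : 3 ≤ t0) (h1 : 3 ≤ t1) (h2 : 3 ≤ t2) :
    81 ≤ ffun t0 t1 t2 := by
  obtain ⟨x, hx, rfl⟩ : ∃ x, 0 ≤ x ∧ t0 = x + 3 := ⟨t0 - 3, by omega, by ring⟩
  obtain ⟨y, hy, rfl⟩ : ∃ y, 0 ≤ y ∧ t1 = y + 3 := ⟨t1 - 3, by omega, by ring⟩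
  obtain ⟨z, hz, rfl⟩ : ∃ z, 0 ≤ z ∧ t2 = z + 3 := ⟨t2 - 3, by omega, by ring⟩
  rw [ffun_add_three]
  have : 0 ≤ 63 * (x + y + z) + 12 * (x ^ 2 + y ^ 2 + z ^ 2) + 27 * (x * y + y * z + z * x)
      + 3 * (x ^ 2 * (y + z) + y ^ 2 * (z + x) + z ^ 2 * (x + y)) + 3 * x * y * z := by
    positivity
  linarith

theorem stmt6 :
    (∀ t0 t1 t2 : ℤ, 3 ≤ t0 → 3 ≤ t1 → 3 ≤ t2 → 0 ≤ ffun t0 t1 t2) ∧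
    ffun 3 3 3 = 81 :=
  ⟨fun _ _ _ h0 h1 h2 => (eighty_one_le_ffun h0 h1 h2).trans' (by norm_num), by decide⟩
end

section
/- Let n = 3l with l ≥ 2 and let (t0,t1,t2) satisfy t0 = 0, t1 ≡ t2 ≡ 0 (mod 3), 0 < t1 ≤ t2, t1 + t2 = n. Then the eigenvalue λ(0,t1,t2) = [multinomial(n; l,l,l)/binomial(n, t1)] · binomial(l, t1/3) of O_{n,3} satisfies |λ(0,t1,t2)| ≤ multinomial(n; l,l,l)/(n-1) = |λ(1,1,n-2)|. -/
private theorem choose_le_of_le_half {n j k : ℕ} (hjk : j ≤ k) (hk : k ≤ n / 2) :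
    n.choose j ≤ n.choose k := by
  induction hjk using Nat.decreasingInduction with
  | self => rfl
  | of_succ r hr ih =>
    exact (Nat.choose_le_succ_of_lt_half_left (lt_of_lt_of_le hr hk)).trans ih

private theorem key (l s : ℕ) (hl : 2 ≤ l) (hs : 1 ≤ s) (h2s : 2 * s ≤ l) :
    (3 * l - 1) * l.choose s ≤ (3 * l).choose (3 * s) := by
  have hvdm : (l + 2 * l).choose (3 * s) =
      ∑ ij ∈ Finset.HasAntidiagonal.antidiagonal (3 * s), l.choose ij.1 * (2 * l).choose ij.2 :=
    Nat.add_choose_eq l (2 * l) (3 * s)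
  have hmem : ((s, 2 * s)) ∈ Finset.HasAntidiagonal.antidiagonal (3 * s) := by
    simp [Finset.mem_antidiagonal]; ring
  have hterm : l.choose s * (2 * l).choose (2 * s) ≤ (3 * l).choose (3 * s) := by
    have : (l + 2 * l) = 3 * l := by ring
    rw [← this, hvdm]
    exact Finset.single_le_sum (f := fun ij => l.choose ij.1 * (2 * l).choose ij.2)
      (fun i _ => Nat.zero_le _) hmem
  have hmid : (2 * l).choose 2 ≤ (2 * l).choose (2 * s) := by
    apply choose_le_of_le_half (by omega)
    omega
  have hbound : 3 * l - 1 ≤ (2 * l).choose 2 := by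
    rw [Nat.choose_two_right, Nat.mul_assoc, Nat.mul_div_cancel_left _ (by norm_num : 0 < 2)]
    calc 3 * l - 1 ≤ l * 3 := by omega
      _ ≤ l * (2 * l - 1) := Nat.mul_le_mul_left l (by omega)
  calc (3 * l - 1) * l.choose s ≤ (2 * l).choose (2 * s) * l.choose s := by
        exact Nat.mul_le_mul_right _ (hbound.trans hmid)
    _ = l.choose s * (2 * l).choose (2 * s) := by ring
    _ ≤ (3 * l).choose (3 * s) := hterm

theorem stmt8 (l n : ℕ) (hl : 2 ≤ l) (hn : n = 3 * l)
    (t1 t2 : ℕ) (h1 : 3 ∣ t1) (h2 : 3 ∣ t2) (hpos : 0 < t1) (hle : t1 ≤ t2)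
    (hsum : t1 + t2 = n) :
    |((Nat.multinomial Finset.univ ![l, l, l] : ℚ) / (n.choose t1 : ℚ))
        * (l.choose (t1 / 3) : ℚ)|
      ≤ (Nat.multinomial Finset.univ ![l, l, l] : ℚ) / ((n : ℚ) - 1) := by
  obtain ⟨s, rfl⟩ := h1
  have hs : 1 ≤ s := by omega
  have h2s : 2 * s ≤ l := by omega
  have hkey := key l s hl hs h2s
  have hdiv : (3 * s) / 3 = s := by omega
  have hM : 0 < (Nat.multinomial Finset.univ ![l, l, l] : ℚ) := by
    exact_mod_cast Nat.multinomial_pos _ _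
  have hC : 0 < ((n.choose (3 * s)) : ℚ) := by
    have : 3 * s ≤ n := by omega
    exact_mod_cast Nat.choose_pos this
  have hn1 : (0 : ℚ) < (n : ℚ) - 1 := by
    have : 6 ≤ n := by omega
    have : (6 : ℚ) ≤ (n : ℚ) := by exact_mod_cast this
    linarith
  rw [hdiv, abs_of_nonneg (by positivity), div_mul_eq_mul_div,
    div_le_div_iff₀ hC hn1]
  have hcast : ((n : ℚ) - 1) = ((n - 1 : ℕ) : ℚ) := by
    have : 1 ≤ n := by omega
    push_cast [this]; ring
  rw [hcast]
  have : (Nat.multinomial Finset.univ ![l, l, l]) * ((l.choose s) * (n - 1))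
      ≤ (Nat.multinomial Finset.univ ![l, l, l]) * (n.choose (3 * s)) := by
    apply Nat.mul_le_mul_left
    subst hn
    calc l.choose s * (3 * l - 1) = (3 * l - 1) * l.choose s := Nat.mul_comm _ _
      _ ≤ (3 * l).choose (3 * s) := hkey
  calc (Nat.multinomial Finset.univ ![l, l, l] : ℚ) * (l.choose s) * ((n - 1 : ℕ) : ℚ)
      = ((Nat.multinomial Finset.univ ![l, l, l] * ((l.choose s) * (n - 1)) : ℕ) : ℚ) := by
        push_cast; ring
    _ ≤ ((Nat.multinomial Finset.univ ![l, l, l] * (n.choose (3 * s)) : ℕ) : ℚ) := by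
        exact_mod_cast this
    _ = (Nat.multinomial Finset.univ ![l, l, l] : ℚ) * (n.choose (3 * s)) := by push_cast; ring
end

section
/- Let p ≥ 2 be an integer and (t0, t1, ..., t_{p-1}) an ordered non-negative p-partition of n with t_i = t_{p-i} for 1 ≤ i ≤ ⌊p/2⌋ and Σ_{i=0}^{p-1} i·t_i ≡ 0 (mod p). Then the map φ : (Z/pZ)^{n-1} → (Z/pZ)^n sending x to (x, -x·1) (appending the negative of the coordinate sum) is a graph homomorphism from H = Cay((Z/pZ)^{n-1}, S) to G = Cay((Z/pZ)^n, T), where T is the set of vectors of type (t0,...,t_{p-1}) in (Z/pZ)^n and S is the union over j of sets of vectors of type (t0,...,t_j - 1,...,t_{p-1}) in (Z/pZ)^{n-1}. Conversely, projection onto the first n-1 coordinates is a graph homomorphism G → H. -/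
open Finset

/-- Number of coordinates of `v` equal to `i` (the type of `v`). -/
def typeCountP {p m : ℕ} (v : Fin m → ZMod p) (i : ZMod p) : ℕ :=
  (Finset.univ.filter (fun j => v j = i)).card

/-- Appending the negative of the coordinate sum (a check digit). -/
def phiMap (p n : ℕ) (x : Fin (n - 1) → ZMod p) : Fin n → ZMod p :=
  fun i => if h : (i : ℕ) < n - 1 then x ⟨i, h⟩ else -(∑ j, x j)

/-- Projection onto the first `n-1` coordinates. -/
def projMap (p n : ℕ) (y : Fin n → ZMod p) : Fin (n - 1) → ZMod p :=
  fun j => y (Fin.castLE (Nat.sub_le n 1) j)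

/-!
Write `d = x - y`. The last coordinate of `φ(x) - φ(y)` is `-∑ d`, and grouping the coordinates
of `d` by value gives `∑ d = ∑ c, c * typeCountP d c`. If `d` has type `t - e_j`, then
`∑ c, c * t c ≡ 0 (mod p)` makes this sum `-j`, so the appended coordinate is `j` and restores
the type `t`. Conversely, deleting the last coordinate `j` of a vector of type `t` leaves a
vector of type `t - e_j`.
-/

section TypeCount

variable {p m : ℕ}

lemma typeCountP_eq_init_add (v : Fin (m + 1) → ZMod p) (i : ZMod p) :
    typeCountP v i = typeCountP (Fin.init v) i + if i = v (Fin.last m) then 1 else 0 := by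
  simp only [typeCountP, Finset.card_filter, Fin.sum_univ_castSucc, Fin.init, eq_comm]

variable [NeZero p]

lemma sum_typeCountP (v : Fin m → ZMod p) : ∑ c, typeCountP v c = m := by
  simpa [typeCountP] using
    (Finset.card_eq_sum_card_fiberwise (s := (univ : Finset (Fin m))) (f := v) (t := univ)
      fun x _ => by simp).symm

lemma sum_eq_sum_mul_typeCountP (v : Fin m → ZMod p) :
    ∑ k, v k = ∑ c, c * (typeCountP v c : ZMod p) := by
  rw [← Finset.sum_fiberwise univ v v]
  refine Finset.sum_congr rfl fun c _ => ?_
  rw [Finset.sum_congr rfl fun k hk => (Finset.mem_filter.mp hk).2]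
  simp [typeCountP, mul_comm]

/-- The truncated subtraction in `t j - 1` is harmless: `t j = 0` would make the type of `d`
equal to `t`, whose total `m + 1` exceeds the length of `d`. -/
lemma typeCountP_add_ite_eq {t : ZMod p → ℕ} (hsum : ∑ c, t c = m + 1)
    {d : Fin m → ZMod p} {j : ZMod p}
    (hd : ∀ c, typeCountP d c = t c - if c = j then 1 else 0) (c : ZMod p) :
    typeCountP d c + (if c = j then 1 else 0) = t c := by
  have htj : 1 ≤ t j := by
    by_contra! h
    have hdt : ∀ c, typeCountP d c = t c := fun c => by
      rw [hd c]; split_ifs with hc <;> [subst hc; skip] <;> omega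
    have := sum_typeCountP d
    simp only [hdt, hsum] at this
    omega
  rw [hd c]
  split_ifs with hc <;> [subst hc; skip] <;> omega

lemma sum_eq_neg_of_typeCountP_eq {t : ZMod p → ℕ} (hsum : ∑ c, t c = m + 1)
    (hcong : ∑ c, c * (t c : ZMod p) = 0) {d : Fin m → ZMod p} {j : ZMod p}
    (hd : ∀ c, typeCountP d c = t c - if c = j then 1 else 0) :
    ∑ k, d k = -j := by
  have hcast : ∀ c, (typeCountP d c : ZMod p) = t c - if c = j then 1 else 0 := fun c => by
    rw [← typeCountP_add_ite_eq hsum hd c]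
    push_cast
    ring
  simp only [sum_eq_sum_mul_typeCountP d, hcast, mul_sub, Finset.sum_sub_distrib, hcong,
    mul_ite, mul_one, mul_zero, Finset.sum_ite_eq', mem_univ, if_true, zero_sub]

end TypeCount

section Maps

variable {p m : ℕ}

lemma phiMap_sub (n : ℕ) (x y : Fin (n - 1) → ZMod p) :
    phiMap p n x - phiMap p n y = phiMap p n (x - y) := by
  funext i
  simp only [phiMap, Pi.sub_apply, Finset.sum_sub_distrib]
  split_ifs <;> ring

lemma typeCountP_phiMap (x : Fin m → ZMod p) (i : ZMod p) :
    typeCountP (phiMap p (m + 1) x) i = typeCountP x i + if i = -∑ k, x k then 1 else 0 := by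
  rw [typeCountP_eq_init_add]
  congr 3
  · funext k
    simp [Fin.init, phiMap]
  · simp [phiMap]

lemma typeCountP_phiMap_of_typeCountP_eq [NeZero p] {t : ZMod p → ℕ}
    (hsum : ∑ c, t c = m + 1) (hcong : ∑ c, c * (t c : ZMod p) = 0)
    {d : Fin m → ZMod p} {j : ZMod p}
    (hd : ∀ c, typeCountP d c = t c - if c = j then 1 else 0) (i : ZMod p) :
    typeCountP (phiMap p (m + 1) d) i = t i := by
  rw [typeCountP_phiMap, sum_eq_neg_of_typeCountP_eq hsum hcong hd, neg_neg]
  exact typeCountP_add_ite_eq hsum hd i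

lemma projMap_sub (n : ℕ) (x y : Fin n → ZMod p) :
    projMap p n x - projMap p n y = projMap p n (x - y) := rfl

lemma projMap_succ (y : Fin (m + 1) → ZMod p) : projMap p (m + 1) y = Fin.init y := rfl

end Maps

lemma sum_mul_natCast_eq_zero {p : ℕ} [NeZero p] {t : ZMod p → ℕ}
    (hcong : (∑ i : ZMod p, (i.val * t i)) % p = 0) : ∑ c, c * (t c : ZMod p) = 0 := by
  have := congrArg (Nat.cast : ℕ → ZMod p) hcong
  rw [ZMod.natCast_mod] at this
  push_cast [ZMod.natCast_val, ZMod.cast_id] at this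
  exact this

theorem stmt11_general (p n : ℕ) [NeZero p] (hn : 1 ≤ n)
    (t : ZMod p → ℕ) (hsum : ∑ i, t i = n)
    (hcong : (∑ i : ZMod p, (i.val * t i)) % p = 0) :
    (∀ x y : Fin (n - 1) → ZMod p,
      (∃ j : ZMod p, ∀ i : ZMod p,
          typeCountP (x - y) i = t i - (if i = j then 1 else 0)) →
      (∀ i : ZMod p, typeCountP (phiMap p n x - phiMap p n y) i = t i)) ∧
    (∀ x y : Fin n → ZMod p,
      (∀ i : ZMod p, typeCountP (x - y) i = t i) →
      (∃ j : ZMod p, ∀ i : ZMod p,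
          typeCountP (projMap p n x - projMap p n y) i
            = t i - (if i = j then 1 else 0))) := by
  obtain ⟨m, rfl⟩ : ∃ m, n = m + 1 := ⟨n - 1, by omega⟩
  constructor
  · rintro x y ⟨j, hj⟩ i
    rw [phiMap_sub]
    exact typeCountP_phiMap_of_typeCountP_eq hsum (sum_mul_natCast_eq_zero hcong) hj i
  · intro x y hxy
    refine ⟨(x - y) (Fin.last m), fun i => ?_⟩
    have hsplit := typeCountP_eq_init_add (x - y) i
    rw [hxy] at hsplit
    rw [projMap_sub, projMap_succ]
    omega

theorem stmt11 (p n : ℕ) [NeZero p] (hp : 2 ≤ p) (hn : 1 ≤ n)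
    (t : ZMod p → ℕ) (hsum : ∑ i, t i = n)
    (hsymm : ∀ i : ZMod p, t (-i) = t i)
    (hcong : (∑ i : ZMod p, (i.val * t i)) % p = 0) :
    (∀ x y : Fin (n - 1) → ZMod p,
      (∃ j : ZMod p, ∀ i : ZMod p,
          typeCountP (x - y) i = t i - (if i = j then 1 else 0)) →
      (∀ i : ZMod p, typeCountP (phiMap p n x - phiMap p n y) i = t i)) ∧
    (∀ x y : Fin n → ZMod p,
      (∀ i : ZMod p, typeCountP (x - y) i = t i) →
      (∃ j : ZMod p, ∀ i : ZMod p,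
          typeCountP (projMap p n x - projMap p n y) i
            = t i - (if i = j then 1 else 0))) :=
  stmt11_general p n hn t hsum hcong
end

section
/- Suppose F = {B_1, ..., B_b} is a family of subsets of [n] such that for every pair of distinct elements i, j ∈ [n], exactly θ members of F contain exactly one of i, j (a balanced pair-separating family with separation number θ), and suppose θ ≥ b/2. Then the map φ : (Z/2Z)^n → {±1}^{2θ} defined by φ(v) = (χ_{B_1}(v), ..., χ_{B_b}(v), 1, ..., 1) (padding with 2θ - b ones), where χ_B(v) = (-1)^{Σ_{i∈B} v_i}, is a flat orthogonal representation of H(n,2): for any u, v ∈ (Z/2Z)^n with wt(u+v) = 2, the vectors φ(u) and φ(v) are orthogonal in R^{2θ}. -/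
open Finset

/-- Hamming weight of a binary vector. -/
def wt {n : ℕ} (v : Fin n → ZMod 2) : ℕ :=
  (Finset.univ.filter (fun j => v j = 1)).card

/-- The flat representation built from a family of blocks:
characters on the first `b` coordinates, padded with `1`'s. -/
noncomputable def phiRep {n b : ℕ} (F : Fin b → Finset (Fin n)) (θ : ℕ)
    (v : Fin n → ZMod 2) : Fin (2 * θ) → ℝ :=
  fun k => if h : (k : ℕ) < b then (-1 : ℝ) ^ (∑ i ∈ F ⟨k, h⟩, (v i).val) else 1

lemma chi_mul (a c : ZMod 2) :
    ((-1 : ℝ)) ^ a.val * (-1) ^ c.val = (-1) ^ ((a + c).val) := by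
  rw [← pow_add, ZMod.val_add, ← neg_one_pow_eq_pow_mod_two]

theorem stmt15 (n b θ : ℕ) (F : Fin b → Finset (Fin n))
    (hsep : ∀ i j : Fin n, i ≠ j →
      (Finset.univ.filter (fun k : Fin b => Xor (i ∈ F k) (j ∈ F k))).card = θ)
    (hθ : b ≤ 2 * θ) :
    (∀ (v : Fin n → ZMod 2) (k : Fin (2 * θ)), |phiRep F θ v k| = 1) ∧
    (∀ u v : Fin n → ZMod 2, wt (u + v) = 2 →
      ∑ k, phiRep F θ u k * phiRep F θ v k = 0) := by
  constructor
  · intro v k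
    unfold phiRep
    split_ifs with h
    · rw [abs_pow, abs_neg, abs_one, one_pow]
    · exact abs_one
  · intro u v hw
    set z : Fin n → ZMod 2 := u + v with hz
    -- extract the two support points
    obtain ⟨i, j, hij, hset⟩ := Finset.card_eq_two.mp hw
    have hzmem : ∀ t : Fin n, z t = 1 ↔ t ∈ ({i, j} : Finset (Fin n)) := by
      intro t
      rw [← hset]
      simp [wt, z]
    -- value of each product term for k < b
    have key : ∀ (k : Fin b),
        (-1 : ℝ) ^ (∑ t ∈ F k, (u t).val) * (-1) ^ (∑ t ∈ F k, (v t).val)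
          = if Xor (i ∈ F k) (j ∈ F k) then -1 else 1 := by
      intro k
      rw [← Finset.prod_pow_eq_pow_sum, ← Finset.prod_pow_eq_pow_sum,
        ← Finset.prod_mul_distrib]
      have : ∀ t ∈ F k, (-1 : ℝ) ^ (u t).val * (-1) ^ (v t).val
          = (-1 : ℝ) ^ (z t).val := fun t _ => chi_mul (u t) (v t)
      rw [Finset.prod_congr rfl this, Finset.prod_pow_eq_pow_sum]
      have hval : ∀ t : Fin n, (z t).val = if t ∈ ({i, j} : Finset (Fin n)) then 1 else 0 := by
        intro t
        by_cases ht : t ∈ ({i, j} : Finset (Fin n))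
        · simp [ht, (hzmem t).mpr ht, show ((1:ZMod 2)).val = 1 from rfl]
        · have h0 : z t = 0 := by
            have := (hzmem t).not.mpr (by simpa using ht)
            revert this
            generalize z t = a
            revert a; decide
          simp [ht, h0]
      have hsum : (∑ t ∈ F k, (z t).val) = (F k ∩ {i, j}).card := by
        simp_rw [hval]
        rw [Finset.sum_ite_mem]
        simp
      rw [hsum]
      by_cases hi : i ∈ F k <;> by_cases hj : j ∈ F k
      · have : F k ∩ {i, j} = {i, j} := by
          apply Finset.inter_eq_right.mpr
          intro t ht
          simp at ht
          rcases ht with rfl | rfl <;> assumption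
        rw [this, Finset.card_insert_of_notMem (by simpa using hij), Finset.card_singleton]
        simp [Xor, hi, hj]
      · have : F k ∩ {i, j} = {i} := by
          ext t; simp only [Finset.mem_inter, Finset.mem_insert, Finset.mem_singleton]
          constructor
          · rintro ⟨h1, rfl | rfl⟩
            · rfl
            · exact absurd h1 hj
          · rintro rfl; exact ⟨hi, Or.inl rfl⟩
        rw [this, Finset.card_singleton]
        simp [Xor, hi, hj]
      · have : F k ∩ {i, j} = {j} := by
          ext t; simp only [Finset.mem_inter, Finset.mem_insert, Finset.mem_singleton]
          constructor
          · rintro ⟨h1, rfl | rfl⟩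
            · exact absurd h1 hi
            · rfl
          · rintro rfl; exact ⟨hj, Or.inr rfl⟩
        rw [this, Finset.card_singleton]
        simp [Xor, hi, hj]
      · have : F k ∩ {i, j} = ∅ := by
          ext t; simp only [Finset.mem_inter, Finset.mem_insert, Finset.mem_singleton,
            Finset.notMem_empty, iff_false]
          rintro ⟨h1, rfl | rfl⟩
          · exact hi h1
          · exact hj h1
        rw [this, Finset.card_empty]
        simp [Xor, hi, hj]
    -- split the big sum
    have hA : (univ.filter (fun k : Fin (2*θ) => (k : ℕ) < b))
        = Finset.map (Fin.castLEEmb hθ) univ := by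
      ext k
      simp only [Finset.mem_filter, Finset.mem_univ, true_and, Finset.mem_map,
        Fin.castLEEmb, Function.Embedding.coeFn_mk]
      constructor
      · intro h; exact ⟨⟨k, h⟩, rfl⟩
      · rintro ⟨a, rfl⟩; exact a.isLt
    rw [← Finset.sum_filter_add_sum_filter_not univ (fun k : Fin (2*θ) => (k : ℕ) < b)]
    have h1 : ∑ k ∈ univ.filter (fun k : Fin (2*θ) => (k : ℕ) < b),
        phiRep F θ u k * phiRep F θ v k
        = (b : ℝ) - 2 * θ := by
      rw [hA, Finset.sum_map]
      have key2 : ∀ k : Fin b,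
          phiRep F θ u (Fin.castLEEmb hθ k) * phiRep F θ v (Fin.castLEEmb hθ k)
          = if Xor (i ∈ F k) (j ∈ F k) then (-1 : ℝ) else 1 := by
        intro k
        have hk : ((Fin.castLEEmb hθ k : Fin (2*θ)) : ℕ) < b := k.isLt
        simp only [phiRep, dif_pos hk]
        have hFk : (⟨((Fin.castLEEmb hθ k : Fin (2*θ)) : ℕ), hk⟩ : Fin b) = k := by
          apply Fin.ext; rfl
        rw [hFk]
        exact key k
      rw [Finset.sum_congr rfl (fun k _ => key2 k)]
      rw [Finset.sum_ite, Finset.sum_const, Finset.sum_const]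
      rw [hsep i j hij]
      have hcard : (univ.filter (fun k : Fin b => ¬ Xor (i ∈ F k) (j ∈ F k))).card
          = b - θ := by
        have := Finset.card_filter_add_card_filter_not
          (s := (univ : Finset (Fin b))) (p := fun k : Fin b => Xor (i ∈ F k) (j ∈ F k))
        rw [hsep i j hij, Finset.card_univ, Fintype.card_fin] at this
        omega
      rw [hcard]
      have hθb : θ ≤ b := by
        have h3 := hsep i j hij
        calc θ = _ := h3.symm
          _ ≤ (univ : Finset (Fin b)).card := Finset.card_filter_le _ _
          _ = b := by simp
      simp only [nsmul_eq_mul, mul_neg_one, mul_one]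
      rw [Nat.cast_sub hθb]
      ring
    have h2 : ∑ k ∈ univ.filter (fun k : Fin (2*θ) => ¬ (k : ℕ) < b),
        phiRep F θ u k * phiRep F θ v k = (2 * θ : ℝ) - b := by
      have hone : ∀ k ∈ univ.filter (fun k : Fin (2*θ) => ¬ (k : ℕ) < b),
          phiRep F θ u k * phiRep F θ v k = 1 := by
        intro k hk
        simp only [Finset.mem_filter] at hk
        simp [phiRep, dif_neg hk.2]
      rw [Finset.sum_congr rfl hone, Finset.sum_const]
      have hcard : (univ.filter (fun k : Fin (2*θ) => ¬ (k : ℕ) < b)).card = 2 * θ - b := by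
        have h4 := Finset.card_filter_add_card_filter_not
          (s := (univ : Finset (Fin (2*θ)))) (p := fun k : Fin (2*θ) => (k : ℕ) < b)
        rw [hA, Finset.card_map] at h4
        simp only [Finset.card_univ, Fintype.card_fin] at h4
        omega
      rw [hcard]
      simp only [nsmul_eq_mul, mul_one]
      rw [Nat.cast_sub hθ]
      push_cast
      ring
    rw [h1, h2]
    ring
end

section
/- Let n = 3l with l ≥ 2, and write t = 3k+2 for k ∈ [0, ⌊n/6⌋ - 1]. Define f(k) = binomial(n-2, 3k+2)/binomial(l-2, k). Then f(k+1)/f(k) = (n-3k-4)(n-3k-5)/((3k+4)(3k+5)) ≥ 1 for k+1 ≤ ⌊n/6⌋ - 1, so f is increasing, and f(k) ≥ f(0) = (n-2)(n-3)/2 ≥ n-3 for n ≥ 6. -/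
set_option maxHeartbeats 1000000


/-- `f(k) = C(n-2, 3k+2)/C(l-2, k)`. -/
noncomputable def fk (n l k : ℕ) : ℚ :=
  ((n - 2).choose (3 * k + 2) : ℚ) / ((l - 2).choose k : ℚ)

lemma choose_two_cast (m : ℕ) : ((m.choose 2 : ℕ) : ℚ) = m * (m - 1) / 2 := by
  induction m with
  | zero => simp
  | succ m ih =>
    have h : (m+1).choose 2 = m + m.choose 2 := by
      rw [Nat.choose_succ_succ, Nat.choose_one_right]
    rw [h]
    push_cast [ih]
    ring

lemma aux_ge (k m : ℕ) : (1:ℚ) ≤ ((6 * (k:ℚ) + 3 * m + 12) - 3 * k - 4) * ((6 * (k:ℚ) + 3 * m + 12) - 3 * k - 5)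
    / ((3 * (k : ℚ) + 4) * (3 * (k : ℚ) + 5)) := by
  rw [le_div_iff₀ (by positivity)]
  have hk0 : (0:ℚ) ≤ (k:ℚ) := Nat.cast_nonneg k
  have hm0 : (0:ℚ) ≤ (m:ℚ) := Nat.cast_nonneg m
  nlinarith

theorem stmt19 (l n : ℕ) (hl : 2 ≤ l) (hn : n = 3 * l) :
    (∀ k : ℕ, k + 1 ≤ n / 6 - 1 →
      fk n l (k + 1) / fk n l k
          = (((n : ℚ) - 3 * k - 4) * ((n : ℚ) - 3 * k - 5))
            / ((3 * (k : ℚ) + 4) * (3 * (k : ℚ) + 5)) ∧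
        fk n l k ≤ fk n l (k + 1)) ∧
    (∀ k : ℕ, k ≤ n / 6 - 1 → fk n l 0 ≤ fk n l k) ∧
    fk n l 0 = ((n : ℚ) - 2) * ((n : ℚ) - 3) / 2 ∧
    (6 ≤ n → (n : ℚ) - 3 ≤ ((n : ℚ) - 2) * ((n : ℚ) - 3) / 2) := by
  subst hn
  have main : ∀ k : ℕ, k + 1 ≤ 3 * l / 6 - 1 →
      fk (3*l) l (k + 1) / fk (3*l) l k
          = ((((3*l : ℕ) : ℚ) - 3 * k - 4) * (((3*l : ℕ) : ℚ) - 3 * k - 5))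
            / ((3 * (k : ℚ) + 4) * (3 * (k : ℚ) + 5)) ∧
        fk (3*l) l k ≤ fk (3*l) l (k + 1) := by
    intro k hk
    have h6 : (k + 2) * 6 ≤ 3 * l := (Nat.le_div_iff_mul_le (by norm_num)).mp (by omega)
    obtain ⟨m, hm⟩ : ∃ m, l = 2 * k + 4 + m := ⟨l - (2 * k + 4), by omega⟩
    subst hm
    have hn2 : 3 * (2 * k + 4 + m) - 2 = 6 * k + 3 * m + 10 := by omega
    have hl2 : 2 * k + 4 + m - 2 = 2 * k + 2 + m := by omega
    set N := 6 * k + 3 * m + 10 with hN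
    set L := 2 * k + 2 + m with hL
    have hfk : ∀ j : ℕ, fk (3 * (2*k+4+m)) (2*k+4+m) j
        = ((N.choose (3 * j + 2) : ℚ)) / ((L.choose j : ℚ)) := by
      intro j; rw [fk, hn2, hl2]
    -- nat recurrences
    have h1 := Nat.choose_succ_right_eq N (3 * k + 2)
    have h2 := Nat.choose_succ_right_eq N (3 * k + 3)
    have h3 := Nat.choose_succ_right_eq N (3 * k + 4)
    have h4 := Nat.choose_succ_right_eq L k
    rw [show N - (3 * k + 2) = 3 * k + 3 * m + 8 by omega,
        show 3 * k + 2 + 1 = 3 * k + 3 by omega] at h1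
    rw [show N - (3 * k + 3) = 3 * k + 3 * m + 7 by omega,
        show 3 * k + 3 + 1 = 3 * k + 4 by omega] at h2
    rw [show N - (3 * k + 4) = 3 * k + 3 * m + 6 by omega,
        show 3 * k + 4 + 1 = 3 * k + 5 by omega] at h3
    rw [show L - k = k + 2 + m by omega] at h4
    -- rationals
    set c2 : ℚ := (N.choose (3 * k + 2) : ℚ) with hc2
    set c3 : ℚ := (N.choose (3 * k + 3) : ℚ) with hc3
    set c4 : ℚ := (N.choose (3 * k + 4) : ℚ) with hc4
    set c5 : ℚ := (N.choose (3 * k + 5) : ℚ) with hc5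
    set d0 : ℚ := (L.choose k : ℚ) with hd0
    set d1 : ℚ := (L.choose (k + 1) : ℚ) with hd1
    have q1 : c3 * (3 * (k:ℚ) + 3) = c2 * (3 * k + 3 * m + 8) := by
      rw [hc2, hc3]; exact_mod_cast congrArg (Nat.cast (R := ℚ)) h1
    have q2 : c4 * (3 * (k:ℚ) + 4) = c3 * (3 * k + 3 * m + 7) := by
      rw [hc3, hc4]; exact_mod_cast congrArg (Nat.cast (R := ℚ)) h2
    have q3 : c5 * (3 * (k:ℚ) + 5) = c4 * (3 * k + 3 * m + 6) := by
      rw [hc4, hc5]; exact_mod_cast congrArg (Nat.cast (R := ℚ)) h3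
    have q4 : d1 * ((k:ℚ) + 1) = d0 * ((k:ℚ) + 2 + m) := by
      rw [hd0, hd1]; exact_mod_cast congrArg (Nat.cast (R := ℚ)) h4
    have hc2pos : 0 < c2 := by
      rw [hc2]; exact_mod_cast Nat.choose_pos (by omega)
    have hc5pos : 0 < c5 := by
      rw [hc5]; exact_mod_cast Nat.choose_pos (by omega)
    have hd0pos : 0 < d0 := by
      rw [hd0]; exact_mod_cast Nat.choose_pos (by omega)
    have hd1pos : 0 < d1 := by
      rw [hd1]; exact_mod_cast Nat.choose_pos (by omega)
    have hk1 : (0:ℚ) < 3 * ((k:ℚ) + 1) := by positivity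
    have key : c5 * d0 * ((3 * (k:ℚ) + 4) * (3 * (k:ℚ) + 5)) * (3 * ((k:ℚ) + 1))
        = ((3 * (k:ℚ) + 3 * m + 8) * (3 * (k:ℚ) + 3 * m + 7)) * (d1 * c2) * (3 * ((k:ℚ) + 1)) := by
      linear_combination (3 * ((k:ℚ) + 1) * (3 * (k:ℚ) + 4) * d0) * q3
        + (3 * ((k:ℚ) + 1) * (3 * (k:ℚ) + 3 * m + 6) * d0) * q2
        + ((3 * (k:ℚ) + 3 * m + 7) * (3 * (k:ℚ) + 3 * m + 6) * d0) * q1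
        - (3 * (3 * (k:ℚ) + 3 * m + 8) * (3 * (k:ℚ) + 3 * m + 7) * c2) * q4
    have key' : c5 * d0 * ((3 * (k:ℚ) + 4) * (3 * (k:ℚ) + 5))
        = ((3 * (k:ℚ) + 3 * m + 8) * (3 * (k:ℚ) + 3 * m + 7)) * (d1 * c2) :=
      mul_right_cancel₀ (ne_of_gt hk1) key
    have hcast : ((3 * (2*k+4+m) : ℕ) : ℚ) = 6 * (k:ℚ) + 3 * m + 12 := by push_cast; ring
    have hrat : fk (3 * (2*k+4+m)) (2*k+4+m) (k + 1) / fk (3 * (2*k+4+m)) (2*k+4+m) k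
        = (((3*(2*k+4+m) : ℕ) : ℚ) - 3 * k - 4) * (((3*(2*k+4+m) : ℕ) : ℚ) - 3 * k - 5)
          / ((3 * (k : ℚ) + 4) * (3 * (k : ℚ) + 5)) := by
      rw [hfk, hfk, hcast, show 3 * (k+1) + 2 = 3 * k + 5 by omega]
      have hA : ((3*(k:ℚ)+4)*(3*(k:ℚ)+5)) ≠ 0 := by positivity
      have hc2ne : ((N.choose (3 * k + 2) : ℕ) : ℚ) ≠ 0 := ne_of_gt hc2pos
      have hd0ne : ((L.choose k : ℕ) : ℚ) ≠ 0 := ne_of_gt hd0pos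
      have hd1ne : ((L.choose (k + 1) : ℕ) : ℚ) ≠ 0 := ne_of_gt hd1pos
      field_simp
      linear_combination key'
    refine ⟨hrat, ?_⟩
    have hpos : 0 < fk (3 * (2*k+4+m)) (2*k+4+m) k := by
      rw [hfk]; exact div_pos hc2pos hd0pos
    have hgr : (1:ℚ) ≤ (((3*(2*k+4+m) : ℕ) : ℚ) - 3 * k - 4) * (((3*(2*k+4+m) : ℕ) : ℚ) - 3 * k - 5)
          / ((3 * (k : ℚ) + 4) * (3 * (k : ℚ) + 5)) := by
      rw [hcast]; exact aux_ge k m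
    rw [← hrat] at hgr
    exact (one_le_div hpos).mp hgr
  refine ⟨main, ?_, ?_, ?_⟩
  · intro k hk
    induction k with
    | zero => exact le_refl _
    | succ k ih =>
      have h1 := (main k hk).2
      have h2 := ih (by omega)
      linarith
  · rw [fk]
    simp only [Nat.mul_zero, Nat.add_zero, Nat.choose_zero_right]
    rw [show 3 * 0 + 2 = 2 by rfl]
    rw [choose_two_cast]
    rw [Nat.cast_sub (by omega)]
    push_cast
    ring
  · intro h6
    have : (6:ℚ) ≤ (3 * l : ℕ) := by exact_mod_cast h6
    nlinarith
end
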